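/- Let M^β_α be the entries of the 2×2 operator matrix L_1 · L_2, where L_i = [[a⁺_i, −q k_i],[k_i, a⁻_i]] are q-boson operator matrices in two commuting copies (i = 1, 2) of the q-boson algebra. Explicitly M^0_0 = a⁺_1a⁺_2 − q k_1k_2, M^0_1 = −q(a⁺_1 k_2 + k_1 a⁻_2), M^1_0 = k_1 a⁺_2 + a⁻_1 k_2, M^1_1 = a⁻_1 a⁻_2 − q k_1 k_2. Then: (i) M^0_1 M^1_0 = M^1_0 M^0_1; (ii) M^α_{1−α} M^0_0 = q M^0_0 M^α_{1−α} for α ∈ {0,1}; (iii) M^α_{1−α} M^1_1 = q^{-1} M^1_1 M^α_{1−α} for α ∈ {0,1}. -/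
import Mathlib
set_option maxHeartbeats 1000000


noncomputable section

/-- First-copy creation operator `a⁺_1` on `F_q ⊗ F_q` (coefficient-wise). -/
def a1p (v : ℕ → ℕ → ℂ) : ℕ → ℕ → ℂ := fun m₁ m₂ => match m₁ with
  | 0 => 0
  | Nat.succ l => v l m₂

/-- Second-copy creation operator `a⁺_2`. -/
def a2p (v : ℕ → ℕ → ℂ) : ℕ → ℕ → ℂ := fun m₁ m₂ => match m₂ with
  | 0 => 0
  | Nat.succ l => v m₁ l

/-- First-copy annihilation operator `a⁻_1`. -/
def a1m (q : ℂ) (v : ℕ → ℕ → ℂ) : ℕ → ℕ → ℂ :=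
  fun m₁ m₂ => (1 - q ^ (2 * (m₁ + 1))) * v (m₁ + 1) m₂

/-- Second-copy annihilation operator `a⁻_2`. -/
def a2m (q : ℂ) (v : ℕ → ℕ → ℂ) : ℕ → ℕ → ℂ :=
  fun m₁ m₂ => (1 - q ^ (2 * (m₂ + 1))) * v m₁ (m₂ + 1)

/-- First-copy grading operator `k_1`. -/
def k1 (q : ℂ) (v : ℕ → ℕ → ℂ) : ℕ → ℕ → ℂ := fun m₁ m₂ => q ^ m₁ * v m₁ m₂

/-- Second-copy grading operator `k_2`. -/
def k2 (q : ℂ) (v : ℕ → ℕ → ℂ) : ℕ → ℕ → ℂ := fun m₁ m₂ => q ^ m₂ * v m₁ m₂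

/-- `M^0_0 = a⁺_1 a⁺_2 - q k_1 k_2`. -/
def M00 (q : ℂ) : (ℕ → ℕ → ℂ) → (ℕ → ℕ → ℂ) :=
  fun v => a1p (a2p v) - q • k1 q (k2 q v)

/-- `M^0_1 = -q (a⁺_1 k_2 + k_1 a⁻_2)`. -/
def M01 (q : ℂ) : (ℕ → ℕ → ℂ) → (ℕ → ℕ → ℂ) :=
  fun v => (-q) • (a1p (k2 q v) + k1 q (a2m q v))

/-- `M^1_0 = k_1 a⁺_2 + a⁻_1 k_2`. -/
def M10 (q : ℂ) : (ℕ → ℕ → ℂ) → (ℕ → ℕ → ℂ) :=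
  fun v => k1 q (a2p v) + a1m q (k2 q v)

/-- `M^1_1 = a⁻_1 a⁻_2 - q k_1 k_2`. -/
def M11 (q : ℂ) : (ℕ → ℕ → ℂ) → (ℕ → ℕ → ℂ) :=
  fun v => a1m q (a2m q v) - q • k1 q (k2 q v)

/-- (i) `M^0_1 M^1_0 = M^1_0 M^0_1`;
(ii) `M^α_{1-α} M^0_0 = q M^0_0 M^α_{1-α}`;
(iii) `M^α_{1-α} M^1_1 = q⁻¹ M^1_1 M^α_{1-α}`. -/
theorem stmt12 (q : ℂ) (hq : q ≠ 0) :
    M01 q ∘ M10 q = M10 q ∘ M01 q ∧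
    M01 q ∘ M00 q = q • (M00 q ∘ M01 q) ∧
    M10 q ∘ M00 q = q • (M00 q ∘ M10 q) ∧
    M01 q ∘ M11 q = q⁻¹ • (M11 q ∘ M01 q) ∧
    M10 q ∘ M11 q = q⁻¹ • (M11 q ∘ M10 q) := by
  refine ⟨?_, ?_, ?_, ?_, ?_⟩ <;>
    [skip; skip; skip; rw [eq_inv_smul_iff₀ hq]; rw [eq_inv_smul_iff₀ hq]] <;>
  (funext v m₁ m₂
   simp only [Function.comp, M00, M01, M10, M11, a1p, a2p, a1m, a2m, k1, k2,
     Pi.add_apply, Pi.sub_apply, Pi.smul_apply, smul_eq_mul]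
   rcases m₁ with _ | _ | m₁ <;> rcases m₂ with _ | _ | m₂ <;>
     simp only [a1p, a2p, a1m, a2m, k1, k2, Pi.add_apply, Pi.sub_apply,
       Pi.smul_apply, smul_eq_mul] <;>
     ring)
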